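/- arXiv:1606.01469 — 10 statements merged into one kernel-verified Lean document; each statement's English description precedes it below -/
import Mathlib

section
/- Let a, b, c be pairwise distinct real numbers with P ≠ 0, m ≠ −1, and let a', b', c' be real numbers satisfying the pairwise derivative relations. Then 4P·(a'−b')/(a−b) − ((a−b)(a'−b') + (a−c)(a'−c') + (b−c)(b'−c')) = 2P(c−a−b) − ((m+2)/(m+1))·S. -/
/-- P := a² + b² + c² − ab − bc − ac -/
def Pe (a b c : ℝ) : ℝ := a ^ 2 + b ^ 2 + c ^ 2 - a * b - b * c - a * c

/-- S := a²b + ab² + a²c + ac² + b²c + bc² − 6abc -/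
def Se (a b c : ℝ) : ℝ :=
  a ^ 2 * b + a * b ^ 2 + a ^ 2 * c + a * c ^ 2 + b ^ 2 * c + b * c ^ 2 - 6 * a * b * c

/-- Let a, b, c be pairwise distinct real numbers with P ≠ 0, m ≠ −1,
and let a', b', c' be real numbers satisfying the pairwise derivative relations
(x'−y')/(x−y) = −(x+y) − z/(m+1) − (1/(2(m+1)))·(x−z)(y−z)(x+y−2z)/P for each
permutation (x,y,z) of (a,b,c).  Then
4P·(a'−b')/(a−b) − ((a−b)(a'−b') + (a−c)(a'−c') + (b−c)(b'−c'))
  = 2P(c−a−b) − ((m+2)/(m+1))·S. -/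
theorem stmt_2 (m a b c a' b' c' : ℝ)
    (hab : a ≠ b) (hac : a ≠ c) (hbc : b ≠ c)
    (hP : Pe a b c ≠ 0) (hm : m ≠ -1)
    (h1 : (a' - b') / (a - b) = -(a + b) - c / (m + 1)
        - (1 / (2 * (m + 1))) * ((a - c) * (b - c) * (a + b - 2 * c) / Pe a b c))
    (h2 : (a' - c') / (a - c) = -(a + c) - b / (m + 1)
        - (1 / (2 * (m + 1))) * ((a - b) * (c - b) * (a + c - 2 * b) / Pe a b c))
    (h3 : (b' - c') / (b - c) = -(b + c) - a / (m + 1)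
        - (1 / (2 * (m + 1))) * ((b - a) * (c - a) * (b + c - 2 * a) / Pe a b c)) :
    4 * Pe a b c * ((a' - b') / (a - b))
      - ((a - b) * (a' - b') + (a - c) * (a' - c') + (b - c) * (b' - c'))
      = 2 * Pe a b c * (c - a - b) - ((m + 2) / (m + 1)) * Se a b c := by
  have hab' : a - b ≠ 0 := sub_ne_zero.mpr hab
  have hac' : a - c ≠ 0 := sub_ne_zero.mpr hac
  have hbc' : b - c ≠ 0 := sub_ne_zero.mpr hbc
  have hm1 : m + 1 ≠ 0 := by intro h; apply hm; linarith
  have e1 : a' - b' = (a - b) * (-(a + b) - c / (m + 1)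
      - (1 / (2 * (m + 1))) * ((a - c) * (b - c) * (a + b - 2 * c) / Pe a b c)) := by
    field_simp at h1 ⊢; linarith [h1]
  have e2 : a' - c' = (a - c) * (-(a + c) - b / (m + 1)
      - (1 / (2 * (m + 1))) * ((a - b) * (c - b) * (a + c - 2 * b) / Pe a b c)) := by
    field_simp at h2 ⊢; linarith [h2]
  have e3 : b' - c' = (b - c) * (-(b + c) - a / (m + 1)
      - (1 / (2 * (m + 1))) * ((b - a) * (c - a) * (b + c - 2 * a) / Pe a b c)) := by
    field_simp at h3 ⊢; linarith [h3]
  rw [e1, e2, e3]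
  unfold Pe Se at *
  field_simp
  ring
end

section
/- Let I ⊆ ℝ be an open interval, m ∉ {−1, −2}, and let a, b, c : I → ℝ be differentiable functions whose values are pairwise distinct at every point of I, satisfying at every point the pairwise derivative relations (with a', b', c' the derivatives of a, b, c). Suppose moreover that the function α := (a−b)²/(2√P) is differentiable and satisfies α' = α·(c − a − b) on I. Then S ≡ 0 on I, and consequently the expression f' := −S/(2(m+1)P) vanishes identically on I. -/
theorem Pe_pos_of_ne {a b : ℝ} (c : ℝ) (hab : a ≠ b) : 0 < Pe a b c := by
  have : 0 < (a - b) ^ 2 := by positivity [sub_ne_zero.mpr hab]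
  unfold Pe
  nlinarith [sq_nonneg (b - c), sq_nonneg (a - c)]

theorem mul_sub_eq_of_pairwise_relation {m P x y z x' y' : ℝ} (hm : m + 1 ≠ 0) (hxy : x ≠ y)
    (hP : P ≠ 0)
    (h : (x' - y') / (x - y) = -(x + y) - z / (m + 1)
      - (1 / (2 * (m + 1))) * ((x - z) * (y - z) * (x + y - 2 * z) / P)) :
    2 * (m + 1) * P * (x' - y')
      = (x - y) * (-(2 * (m + 1) * P * (x + y)) - 2 * P * z
          - (x - z) * (y - z) * (x + y - 2 * z)) := by
  have hxy' : x - y ≠ 0 := sub_ne_zero.mpr hxy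
  rw [div_eq_iff hxy'] at h
  rw [h]
  field_simp

theorem hasDerivAt_Pe {a b c : ℝ → ℝ} {a' b' c' s : ℝ} (ha : HasDerivAt a a' s)
    (hb : HasDerivAt b b' s) (hc : HasDerivAt c c' s) :
    HasDerivAt (fun t => Pe (a t) (b t) (c t))
      ((2 * a s - b s - c s) * a' + (2 * b s - a s - c s) * b'
        + (2 * c s - a s - b s) * c') s := by
  have h := (((((ha.pow 2).add (hb.pow 2)).add (hc.pow 2)).sub (ha.mul hb)).sub
    (hb.mul hc)).sub (ha.mul hc)
  refine h.congr_deriv ?_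
  push_cast
  ring

theorem mul_sub_eq_of_hasDerivAt_sq_div_sqrt {u p : ℝ → ℝ} {u' p' k s : ℝ}
    (hu : HasDerivAt u u' s) (hp : HasDerivAt p p' s) (hus : u s ≠ 0) (hps : 0 < p s)
    (h : HasDerivAt (fun t => u t ^ 2 / (2 * Real.sqrt (p t)))
      (u s ^ 2 / (2 * Real.sqrt (p s)) * k) s) :
    4 * u' * p s - u s * p' = 2 * u s * k * p s := by
  have hq2 : Real.sqrt (p s) ^ 2 = p s := Real.sq_sqrt hps.le
  have hderiv := (hu.pow 2).div ((hp.sqrt hps.ne').const_mul 2) (by positivity)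
  have heq := hderiv.unique h
  field_simp at heq
  simp only [Pi.pow_apply, hq2] at heq
  refine mul_left_cancel₀ hus ?_
  linear_combination heq

theorem Se_eq_zero_of_derivative_relations {m A B C da db dc : ℝ} (hm : m + 2 ≠ 0)
    (hAB : A ≠ B)
    (e1 : 2 * (m + 1) * Pe A B C * (da - db)
      = (A - B) * (-(2 * (m + 1) * Pe A B C * (A + B)) - 2 * Pe A B C * C
          - (A - C) * (B - C) * (A + B - 2 * C)))
    (e2 : 2 * (m + 1) * Pe A B C * (da - dc)
      = (A - C) * (-(2 * (m + 1) * Pe A B C * (A + C)) - 2 * Pe A B C * B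
          - (A - B) * (C - B) * (A + C - 2 * B)))
    (e3 : 2 * (m + 1) * Pe A B C * (db - dc)
      = (B - C) * (-(2 * (m + 1) * Pe A B C * (B + C)) - 2 * Pe A B C * A
          - (B - A) * (C - A) * (B + C - 2 * A)))
    (eα : 4 * (da - db) * Pe A B C
        - (A - B) * ((2 * A - B - C) * da + (2 * B - A - C) * db + (2 * C - A - B) * dc)
      = 2 * (A - B) * (C - A - B) * Pe A B C) :
    Se A B C = 0 := by
  have key : (A - B) * (2 * (m + 2)) * Pe A B C * Se A B C = 0 := by
    unfold Pe Se at *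
    linear_combination (-(2 * (m + 1) * (A ^ 2 + B ^ 2 + C ^ 2 - A * B - B * C - A * C))) * eα
      + (4 * (A ^ 2 + B ^ 2 + C ^ 2 - A * B - B * C - A * C) - (A - B) ^ 2) * e1
      - (A - B) * (A - C) * e2 - (A - B) * (B - C) * e3
  have hfactor : (A - B) * (2 * (m + 2)) * Pe A B C ≠ 0 :=
    mul_ne_zero (mul_ne_zero (sub_ne_zero.mpr hAB) (mul_ne_zero two_ne_zero hm))
      (Pe_pos_of_ne C hAB).ne'
  exact (mul_eq_zero.mp key).resolve_left hfactor

theorem stmt_3_general (m : ℝ) (hm1 : m ≠ -1) (hm2 : m ≠ -2)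
    (I : Set ℝ)
    (a b c : ℝ → ℝ)
    (hda : ∀ s ∈ I, DifferentiableAt ℝ a s)
    (hdb : ∀ s ∈ I, DifferentiableAt ℝ b s)
    (hdc : ∀ s ∈ I, DifferentiableAt ℝ c s)
    (hab : ∀ s ∈ I, a s ≠ b s) (hac : ∀ s ∈ I, a s ≠ c s) (hbc : ∀ s ∈ I, b s ≠ c s)
    (h1 : ∀ s ∈ I, (deriv a s - deriv b s) / (a s - b s)
        = -(a s + b s) - c s / (m + 1)
          - (1 / (2 * (m + 1))) * ((a s - c s) * (b s - c s) * (a s + b s - 2 * c s)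
              / Pe (a s) (b s) (c s)))
    (h2 : ∀ s ∈ I, (deriv a s - deriv c s) / (a s - c s)
        = -(a s + c s) - b s / (m + 1)
          - (1 / (2 * (m + 1))) * ((a s - b s) * (c s - b s) * (a s + c s - 2 * b s)
              / Pe (a s) (b s) (c s)))
    (h3 : ∀ s ∈ I, (deriv b s - deriv c s) / (b s - c s)
        = -(b s + c s) - a s / (m + 1)
          - (1 / (2 * (m + 1))) * ((b s - a s) * (c s - a s) * (b s + c s - 2 * a s)
              / Pe (a s) (b s) (c s)))
    (hα : ∀ s ∈ I,
        HasDerivAt (fun t => (a t - b t) ^ 2 / (2 * Real.sqrt (Pe (a t) (b t) (c t))))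
          (((a s - b s) ^ 2 / (2 * Real.sqrt (Pe (a s) (b s) (c s))))
            * (c s - a s - b s)) s) :
    ∀ s ∈ I, Se (a s) (b s) (c s) = 0 ∧
      -(Se (a s) (b s) (c s)) / (2 * (m + 1) * Pe (a s) (b s) (c s)) = 0 := by
  intro s hs
  have hm1' : m + 1 ≠ 0 := fun h => hm1 (by linarith)
  have hm2' : m + 2 ≠ 0 := fun h => hm2 (by linarith)
  have hP := Pe_pos_of_ne (c s) (hab s hs)
  have ha := (hda s hs).hasDerivAt
  have hb := (hdb s hs).hasDerivAt
  have hc := (hdc s hs).hasDerivAt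
  have eα := mul_sub_eq_of_hasDerivAt_sq_div_sqrt (u := fun t => a t - b t) (ha.sub hb)
    (hasDerivAt_Pe ha hb hc) (sub_ne_zero.mpr (hab s hs)) hP (hα s hs)
  have hS : Se (a s) (b s) (c s) = 0 :=
    Se_eq_zero_of_derivative_relations hm2' (hab s hs)
      (mul_sub_eq_of_pairwise_relation hm1' (hab s hs) hP.ne' (h1 s hs))
      (mul_sub_eq_of_pairwise_relation hm1' (hac s hs) hP.ne' (h2 s hs))
      (mul_sub_eq_of_pairwise_relation hm1' (hbc s hs) hP.ne' (h3 s hs))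
      eα
  exact ⟨hS, by rw [hS, neg_zero, zero_div]⟩

/-- Let I ⊆ ℝ be an open interval, m ∉ {−1, −2}, and let
a, b, c : I → ℝ be differentiable functions whose values are pairwise distinct at
every point of I, satisfying at every point the pairwise derivative relations
(with a', b', c' the derivatives of a, b, c).  Suppose moreover that the function
α := (a−b)²/(2√P) is differentiable and satisfies α' = α·(c − a − b) on I.
Then S ≡ 0 on I, and consequently the expression f' := −S/(2(m+1)P) vanishes
identically on I. -/
theorem stmt_3 (m : ℝ) (hm1 : m ≠ -1) (hm2 : m ≠ -2)
    (I : Set ℝ) (hI : IsOpen I) (hIc : I.OrdConnected)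
    (a b c : ℝ → ℝ)
    (hda : ∀ s ∈ I, DifferentiableAt ℝ a s)
    (hdb : ∀ s ∈ I, DifferentiableAt ℝ b s)
    (hdc : ∀ s ∈ I, DifferentiableAt ℝ c s)
    (hab : ∀ s ∈ I, a s ≠ b s) (hac : ∀ s ∈ I, a s ≠ c s) (hbc : ∀ s ∈ I, b s ≠ c s)
    (h1 : ∀ s ∈ I, (deriv a s - deriv b s) / (a s - b s)
        = -(a s + b s) - c s / (m + 1)
          - (1 / (2 * (m + 1))) * ((a s - c s) * (b s - c s) * (a s + b s - 2 * c s)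
              / Pe (a s) (b s) (c s)))
    (h2 : ∀ s ∈ I, (deriv a s - deriv c s) / (a s - c s)
        = -(a s + c s) - b s / (m + 1)
          - (1 / (2 * (m + 1))) * ((a s - b s) * (c s - b s) * (a s + c s - 2 * b s)
              / Pe (a s) (b s) (c s)))
    (h3 : ∀ s ∈ I, (deriv b s - deriv c s) / (b s - c s)
        = -(b s + c s) - a s / (m + 1)
          - (1 / (2 * (m + 1))) * ((b s - a s) * (c s - a s) * (b s + c s - 2 * a s)
              / Pe (a s) (b s) (c s)))
    (hα : ∀ s ∈ I,
        HasDerivAt (fun t => (a t - b t) ^ 2 / (2 * Real.sqrt (Pe (a t) (b t) (c t))))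
          (((a s - b s) ^ 2 / (2 * Real.sqrt (Pe (a s) (b s) (c s))))
            * (c s - a s - b s)) s) :
    ∀ s ∈ I, Se (a s) (b s) (c s) = 0 ∧
      -(Se (a s) (b s) (c s)) / (2 * (m + 1) * Pe (a s) (b s) (c s)) = 0 :=
  stmt_3_general m hm1 hm2 I a b c hda hdb hdc hab hac hbc h1 h2 h3 hα
end

section
/- Let m ∉ {0, 1, −1, −2} and ρ, λ be real parameters, and let a, b, a', b', X be real numbers with a ≠ b and Q(a,b) ≠ 0 satisfying the structure equations (E1), (E2), (E3). Then X = X₀(a,b), a' = A₀(a,b), and b' = B₀(a,b). -/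
noncomputable section

/-- Q(a,b) := b(m−1)(4ρ−1) + a(4ρ−1+m(2ρ−1)) -/
def Q (m ρ a b : ℝ) : ℝ := b * (m - 1) * (4 * ρ - 1) + a * (4 * ρ - 1 + m * (2 * ρ - 1))

/-- X₀(a,b) := (b−a)·(b²(m−1)(1−4ρ) − λ(m+1) + 2ab(4ρ−1+m(5ρ−1)))/Q(a,b) -/
def X0 (m ρ lam a b : ℝ) : ℝ :=
  (b - a) * (b ^ 2 * (m - 1) * (1 - 4 * ρ) - lam * (m + 1)
      + 2 * a * b * (4 * ρ - 1 + m * (5 * ρ - 1))) / Q m ρ a b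

/-- A₀(a,b) := (bλ(m−1) + a²b(1−2(m+2)ρ) + a³(1−4ρ+m(1−2ρ)) + a(λ − 2b²(m−1)(4ρ−1)))/Q(a,b) -/
def A0 (m ρ lam a b : ℝ) : ℝ :=
  (b * lam * (m - 1) + a ^ 2 * b * (1 - 2 * (m + 2) * ρ)
      + a ^ 3 * (1 - 4 * ρ + m * (1 - 2 * ρ))
      + a * (lam - 2 * b ^ 2 * (m - 1) * (4 * ρ - 1))) / Q m ρ a b

/-- B₀(a,b) := b·(λm − b²(m−1)(4ρ−1) − a²(1+m−4ρ−2mρ) − ab(8ρ−2+m(10ρ−3)))/Q(a,b) -/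
def B0 (m ρ lam a b : ℝ) : ℝ :=
  b * (lam * m - b ^ 2 * (m - 1) * (4 * ρ - 1) - a ^ 2 * (1 + m - 4 * ρ - 2 * m * ρ)
      - a * b * (8 * ρ - 2 + m * (10 * ρ - 3))) / Q m ρ a b

/-- Let m ∉ {0, 1, −1, −2} and ρ, λ be real parameters, and let
a, b, a', b', X be real numbers with a ≠ b and Q(a,b) ≠ 0 satisfying the structure
equations (E1), (E2), (E3).  Then X = X₀(a,b), a' = A₀(a,b), and b' = B₀(a,b). -/
theorem stmt_4 (m ρ lam a b a' b' X : ℝ)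
    (hm0 : m ≠ 0) (hm1 : m ≠ 1) (hm1' : m ≠ -1) (hm2 : m ≠ -2)
    (hab : a ≠ b) (hQ : Q m ρ a b ≠ 0)
    (hE1 : (m + 1) * a' + (m + 1) * a ^ 2 - (m + 1) * b' - (m + 2) * b ^ 2 + a * b - X = 0)
    (hE2 : (a - b) * (ρ * (2 * a ^ 2 + 4 * a * b + 6 * b ^ 2 + 2 * X + 2 * a' + 4 * b') - lam)
        = a * X + a * b' - a' * b)
    (hE3 : (2 * m + 1) * a' * b - (m + 2) * a * b' - (m - 1) * b * (b' - X)
        + 3 * (m + 1) * a * b * (a - b) = 0) :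
    X = X0 m ρ lam a b ∧ a' = A0 m ρ lam a b ∧ b' = B0 m ρ lam a b := by
  have h2 : (m + 2) * (a - b) ≠ 0 :=
    mul_ne_zero (fun h => hm2 (by linarith)) (sub_ne_zero.mpr hab)
  have keyX : ((m + 2) * (a - b)) * (Q m ρ a b * X -
      (b - a) * (b ^ 2 * (m - 1) * (1 - 4 * ρ) - lam * (m + 1)
        + 2 * a * b * (4 * ρ - 1 + m * (5 * ρ - 1)))) = 0 := by
    unfold Q
    linear_combination
      (b^2 - a*b + 2*ρ*b^2 + 2*ρ*a*b - 4*ρ*a^2 - m*b^2 + m*a*b + 10*m*ρ*b^2 - 8*m*ρ*a*b - 2*m*ρ*a^2) * hE1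
      + (-2*b + 2*a - 3*m*b + 3*m*a - m^2*b + m^2*a) * hE2
      + (b - a - 6*ρ*b + 6*ρ*a + m*b - m*a - 6*m*ρ*b + 6*m*ρ*a) * hE3
  have keyA : ((m + 2) * (a - b)) * (Q m ρ a b * a' -
      (b * lam * (m - 1) + a ^ 2 * b * (1 - 2 * (m + 2) * ρ)
        + a ^ 3 * (1 - 4 * ρ + m * (1 - 2 * ρ))
        + a * (lam - 2 * b ^ 2 * (m - 1) * (4 * ρ - 1)))) = 0 := by
    unfold Q
    linear_combination
      (2*a*b - 2*a^2 + 6*ρ*b^2 - 10*ρ*a*b + 4*ρ*a^2 - 2*m*a*b - m*a^2 - 6*m*ρ*b^2 + 4*m*ρ*a*b + 2*m*ρ*a^2) * hE1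
      + (-2*b + 2*a + m*b + m*a + m^2*b) * hE2
      + (-2*ρ*b + 2*ρ*a + m*a + 2*m*ρ*b - 2*m*ρ*a) * hE3
  have keyB : ((m + 2) * (a - b)) * (Q m ρ a b * b' -
      b * (lam * m - b ^ 2 * (m - 1) * (4 * ρ - 1) - a ^ 2 * (1 + m - 4 * ρ - 2 * m * ρ)
        - a * b * (8 * ρ - 2 + m * (10 * ρ - 3)))) = 0 := by
    unfold Q
    linear_combination
      (b^2 - a*b - 4*ρ*b^2 + 4*ρ*a*b - m*b^2 - 2*m*a*b - 2*m*ρ*b^2 + 2*m*ρ*a*b) * hE1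
      + (2*m*b + m^2*b) * hE2
      + (-b + a + 4*ρ*b - 4*ρ*a + m*a + 2*m*ρ*b - 2*m*ρ*a) * hE3
  have hX := (mul_eq_zero.mp keyX).resolve_left h2
  have hA := (mul_eq_zero.mp keyA).resolve_left h2
  have hB := (mul_eq_zero.mp keyB).resolve_left h2
  refine ⟨?_, ?_, ?_⟩
  · rw [X0, eq_div_iff hQ]; linear_combination hX
  · rw [A0, eq_div_iff hQ]; linear_combination hA
  · rw [B0, eq_div_iff hQ]; linear_combination hB
end
end

section
/- Let m ∉ {0, −1} and ρ, λ be real parameters, let I ⊆ ℝ be an open interval, and let a, b : I → ℝ be differentiable functions with Q(a(s),b(s)) ≠ 0 for all s ∈ I, whose derivatives satisfy a'(s) = A₀(a(s),b(s)) and b'(s) = B₀(a(s),b(s)). Define X(s) := X₀(a(s),b(s)) and suppose X is differentiable with X'(s) = −2b(s)X(s) on I. Then for every s ∈ I, (a(s)−b(s))·b(s)·(3a(s)b(s)(4ρ−1) − λ)·(λ(m−1)(3ρ−1) + a(s)b(s)(m−1)(4ρ−1) + a(s)²(9ρ−2)(4ρ−1+m(2ρ−1))) = 0. -/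
/-! Along the flow `a' = A₀(a,b)`, `b' = B₀(a,b)` the function `X₀ = N/Q` has a rational
derivative with denominator `Q³`, and a direct computation gives
`X₀' + 2b·X₀ = 2m(m+1)·P(a,b)/Q³`, where `P` is the quartic `X0Defect`. So `X' = −2bX` forces
`P = 0` as soon as `m ∉ {0, −1}`. -/

noncomputable section

def X0num (m ρ lam a b : ℝ) : ℝ :=
  (b - a) * (b ^ 2 * (m - 1) * (1 - 4 * ρ) - lam * (m + 1)
      + 2 * a * b * (4 * ρ - 1 + m * (5 * ρ - 1)))

def X0numDeriv (m ρ lam a b a' b' : ℝ) : ℝ :=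
  (b' - a') * (b ^ 2 * (m - 1) * (1 - 4 * ρ) - lam * (m + 1)
      + 2 * a * b * (4 * ρ - 1 + m * (5 * ρ - 1)))
    + (b - a) * (2 * b * b' * (m - 1) * (1 - 4 * ρ)
      + 2 * (a' * b + a * b') * (4 * ρ - 1 + m * (5 * ρ - 1)))

def X0Defect (m ρ lam a b : ℝ) : ℝ :=
  (a - b) * b * (3 * a * b * (4 * ρ - 1) - lam)
    * (lam * (m - 1) * (3 * ρ - 1) + a * b * (m - 1) * (4 * ρ - 1)
      + a ^ 2 * (9 * ρ - 2) * (4 * ρ - 1 + m * (2 * ρ - 1)))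

theorem X0_quotientDeriv_flow {m ρ lam a b : ℝ} (hQ : Q m ρ a b ≠ 0) :
    (X0numDeriv m ρ lam a b (A0 m ρ lam a b) (B0 m ρ lam a b) * Q m ρ a b
        - X0num m ρ lam a b * Q m ρ (A0 m ρ lam a b) (B0 m ρ lam a b)) / Q m ρ a b ^ 2
      = -2 * b * X0 m ρ lam a b + 2 * m * (m + 1) * X0Defect m ρ lam a b / Q m ρ a b ^ 3 := by
  simp only [X0numDeriv, X0num, X0Defect, X0, A0, B0]
  set q := Q m ρ a b with hq
  rw [Q]
  field_simp
  rw [hq, Q]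
  ring

section Curve

variable {m ρ lam s a' b' : ℝ} {a b : ℝ → ℝ}

theorem HasDerivAt.Q_comp (ha : HasDerivAt a a' s) (hb : HasDerivAt b b' s) :
    HasDerivAt (fun t => Q m ρ (a t) (b t)) (Q m ρ a' b') s :=
  ((hb.mul_const _).mul_const _).add (ha.mul_const _)

theorem HasDerivAt.X0num_comp (ha : HasDerivAt a a' s) (hb : HasDerivAt b b' s) :
    HasDerivAt (fun t => X0num m ρ lam (a t) (b t)) (X0numDeriv m ρ lam (a s) (b s) a' b') s := by
  refine ((hb.sub ha).mul (((((hb.pow 2).mul_const (m - 1)).mul_const (1 - 4 * ρ)).sub_const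
    (lam * (m + 1))).add (((ha.const_mul 2).mul hb).mul_const _))).congr_deriv ?_
  simp only [X0numDeriv, Pi.add_apply, Pi.sub_apply, Pi.mul_apply, Pi.pow_apply, Nat.cast_ofNat]
  ring

theorem HasDerivAt.X0_comp (ha : HasDerivAt a a' s) (hb : HasDerivAt b b' s)
    (hQ : Q m ρ (a s) (b s) ≠ 0) :
    HasDerivAt (fun t => X0 m ρ lam (a t) (b t))
      ((X0numDeriv m ρ lam (a s) (b s) a' b' * Q m ρ (a s) (b s)
        - X0num m ρ lam (a s) (b s) * Q m ρ a' b') / Q m ρ (a s) (b s) ^ 2) s :=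
  (ha.X0num_comp hb).div (ha.Q_comp hb) hQ

theorem HasDerivAt.X0_comp_of_flow (ha : HasDerivAt a (A0 m ρ lam (a s) (b s)) s)
    (hb : HasDerivAt b (B0 m ρ lam (a s) (b s)) s) (hQ : Q m ρ (a s) (b s) ≠ 0) :
    HasDerivAt (fun t => X0 m ρ lam (a t) (b t))
      (-2 * b s * X0 m ρ lam (a s) (b s)
        + 2 * m * (m + 1) * X0Defect m ρ lam (a s) (b s) / Q m ρ (a s) (b s) ^ 3) s :=
  X0_quotientDeriv_flow hQ ▸ ha.X0_comp hb hQ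

end Curve

theorem stmt_5_general (m ρ lam : ℝ) (hm0 : m ≠ 0) (hm1 : m ≠ -1)
    (I : Set ℝ)
    (a b : ℝ → ℝ)
    (hQ : ∀ s ∈ I, Q m ρ (a s) (b s) ≠ 0)
    (hda : ∀ s ∈ I, HasDerivAt a (A0 m ρ lam (a s) (b s)) s)
    (hdb : ∀ s ∈ I, HasDerivAt b (B0 m ρ lam (a s) (b s)) s)
    (hX : ∀ s ∈ I, HasDerivAt (fun t => X0 m ρ lam (a t) (b t))
        (-2 * b s * X0 m ρ lam (a s) (b s)) s) :
    ∀ s ∈ I, (a s - b s) * b s * (3 * a s * b s * (4 * ρ - 1) - lam)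
      * (lam * (m - 1) * (3 * ρ - 1) + a s * b s * (m - 1) * (4 * ρ - 1)
          + (a s) ^ 2 * (9 * ρ - 2) * (4 * ρ - 1 + m * (2 * ρ - 1))) = 0 := by
  intro s hs
  have hdefect : 2 * m * (m + 1) * X0Defect m ρ lam (a s) (b s) / Q m ρ (a s) (b s) ^ 3 = 0 :=
    add_eq_left.mp (((hda s hs).X0_comp_of_flow (hdb s hs) (hQ s hs)).unique (hX s hs))
  have hm1' : m + 1 ≠ 0 := fun h => hm1 (eq_neg_of_add_eq_zero_left h)
  rw [div_eq_zero_iff, mul_eq_zero, or_iff_right (mul_ne_zero (mul_ne_zero two_ne_zero hm0) hm1'),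
    or_iff_left (pow_ne_zero 3 (hQ s hs))] at hdefect
  exact hdefect

/-- Let m ∉ {0, −1} and ρ, λ be real parameters, let I ⊆ ℝ be an open
interval, and let a, b : I → ℝ be differentiable functions with Q(a(s),b(s)) ≠ 0 for
all s ∈ I, whose derivatives satisfy a'(s) = A₀(a(s),b(s)) and b'(s) = B₀(a(s),b(s)).
Define X(s) := X₀(a(s),b(s)) and suppose X is differentiable with X'(s) = −2b(s)X(s)
on I.  Then for every s ∈ I,
(a(s)−b(s))·b(s)·(3a(s)b(s)(4ρ−1) − λ)·(λ(m−1)(3ρ−1) + a(s)b(s)(m−1)(4ρ−1)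
  + a(s)²(9ρ−2)(4ρ−1+m(2ρ−1))) = 0. -/
theorem stmt_5 (m ρ lam : ℝ) (hm0 : m ≠ 0) (hm1 : m ≠ -1)
    (I : Set ℝ) (hI : IsOpen I) (hIc : I.OrdConnected)
    (a b : ℝ → ℝ)
    (hQ : ∀ s ∈ I, Q m ρ (a s) (b s) ≠ 0)
    (hda : ∀ s ∈ I, HasDerivAt a (A0 m ρ lam (a s) (b s)) s)
    (hdb : ∀ s ∈ I, HasDerivAt b (B0 m ρ lam (a s) (b s)) s)
    (hX : ∀ s ∈ I, HasDerivAt (fun t => X0 m ρ lam (a t) (b t))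
        (-2 * b s * X0 m ρ lam (a s) (b s)) s) :
    ∀ s ∈ I, (a s - b s) * b s * (3 * a s * b s * (4 * ρ - 1) - lam)
      * (lam * (m - 1) * (3 * ρ - 1) + a s * b s * (m - 1) * (4 * ρ - 1)
          + (a s) ^ 2 * (9 * ρ - 2) * (4 * ρ - 1 + m * (2 * ρ - 1))) = 0 :=
  stmt_5_general m ρ lam hm0 hm1 I a b hQ hda hdb hX
end
end

section
/- Let m ∉ {0, 1, −1, −2} and ρ ∉ {1/4, 1/6}, λ ∈ ℝ, let I ⊆ ℝ be a nonempty open connected interval, and let a, b : I → ℝ be real analytic functions with a(s) ≠ b(s) and Q(a(s),b(s)) ≠ 0 for all s ∈ I, whose derivatives satisfy a' = A₀(a,b) and b' = B₀(a,b), and such that X(s) := X₀(a(s),b(s)) satisfies X' = −2bX on I. Then at least one of the following holds identically on I: (1) b ≡ 0; (2) 3(4ρ−1)ab − λ ≡ 0; (3) λ(m−1)(3ρ−1) + ab(m−1)(4ρ−1) + a²(9ρ−2)(4ρ−1+m(2ρ−1)) ≡ 0. -/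
noncomputable section

/-! Differentiating `X₀(a, b)` along the system `a' = A₀(a, b)`, `b' = B₀(a, b)` gives
`X' = -2bX - 2m(m+1)(b-a) · b · F₂ · F₃ / Q³`, where `F₂`, `F₃` are the expressions of
alternatives (2) and (3). Hence `X' = -2bX` forces `b · F₂ · F₃ = 0` pointwise, and since the
three factors are analytic on the connected set `I`, one of them vanishes identically. -/

theorem hasDerivAt_X0_comp {m ρ lam : ℝ} {a b : ℝ → ℝ} {s : ℝ}
    (ha : HasDerivAt a (A0 m ρ lam (a s) (b s)) s) (hb : HasDerivAt b (B0 m ρ lam (a s) (b s)) s)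
    (hQ : Q m ρ (a s) (b s) ≠ 0) :
    HasDerivAt (fun t => X0 m ρ lam (a t) (b t))
      (-2 * b s * X0 m ρ lam (a s) (b s)
        - 2 * m * (m + 1) * (b s - a s) * b s * (3 * (4 * ρ - 1) * a s * b s - lam)
          * (lam * (m - 1) * (3 * ρ - 1) + a s * b s * (m - 1) * (4 * ρ - 1)
            + (a s) ^ 2 * (9 * ρ - 2) * (4 * ρ - 1 + m * (2 * ρ - 1)))
          / Q m ρ (a s) (b s) ^ 3) s := by
  have hQ' : HasDerivAt (fun t => Q m ρ (a t) (b t)) _ s :=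
    ((hb.mul_const (m - 1)).mul_const (4 * ρ - 1)).add (ha.mul_const (4 * ρ - 1 + m * (2 * ρ - 1)))
  have hN := (hb.sub ha).mul
    (((((hb.pow 2).mul_const (m - 1)).mul_const (1 - 4 * ρ)).sub_const (lam * (m + 1))).add
      (((ha.const_mul 2).mul hb).mul_const (4 * ρ - 1 + m * (5 * ρ - 1))))
  refine (hN.div hQ' hQ : HasDerivAt (fun t => X0 m ρ lam (a t) (b t)) _ s).congr_deriv ?_
  simp only [X0, A0, B0, Pi.add_apply, Pi.sub_apply, Pi.mul_apply, Pi.pow_apply]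
  field_simp
  unfold Q
  ring

theorem mul_factors_eq_zero_of_hasDerivAt_X0 {m ρ lam : ℝ} {a b : ℝ → ℝ} {s : ℝ}
    (hm0 : m ≠ 0) (hm : m ≠ -1) (hab : a s ≠ b s) (hQ : Q m ρ (a s) (b s) ≠ 0)
    (ha : HasDerivAt a (A0 m ρ lam (a s) (b s)) s) (hb : HasDerivAt b (B0 m ρ lam (a s) (b s)) s)
    (hX : HasDerivAt (fun t => X0 m ρ lam (a t) (b t)) (-2 * b s * X0 m ρ lam (a s) (b s)) s) :
    b s * ((3 * (4 * ρ - 1) * a s * b s - lam)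
      * (lam * (m - 1) * (3 * ρ - 1) + a s * b s * (m - 1) * (4 * ρ - 1)
        + (a s) ^ 2 * (9 * ρ - 2) * (4 * ρ - 1 + m * (2 * ρ - 1)))) = 0 := by
  have h := (hX.unique (hasDerivAt_X0_comp ha hb hQ)).symm
  have hm' : m + 1 ≠ 0 := fun h => hm (eq_neg_of_add_eq_zero_left h)
  have hba : b s - a s ≠ 0 := sub_ne_zero.mpr hab.symm
  simp only [sub_eq_self, div_eq_zero_iff, mul_eq_zero, hQ, hm0, hm', hba,
    pow_eq_zero_iff, ne_eq, OfNat.ofNat_ne_zero, false_or, or_false, not_false_eq_true] at h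
  simpa only [mul_eq_zero, or_assoc] using h

theorem stmt_6_general (m ρ lam : ℝ)
    (hm0 : m ≠ 0) (hm1' : m ≠ -1)
    (I : Set ℝ) (hIc : I.OrdConnected)
    (a b : ℝ → ℝ)
    (hana : AnalyticOnNhd ℝ a I) (hbna : AnalyticOnNhd ℝ b I)
    (habne : ∀ s ∈ I, a s ≠ b s)
    (hQ : ∀ s ∈ I, Q m ρ (a s) (b s) ≠ 0)
    (hda : ∀ s ∈ I, HasDerivAt a (A0 m ρ lam (a s) (b s)) s)
    (hdb : ∀ s ∈ I, HasDerivAt b (B0 m ρ lam (a s) (b s)) s)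
    (hX : ∀ s ∈ I, HasDerivAt (fun t => X0 m ρ lam (a t) (b t))
        (-2 * b s * X0 m ρ lam (a s) (b s)) s) :
    (∀ s ∈ I, b s = 0) ∨
    (∀ s ∈ I, 3 * (4 * ρ - 1) * a s * b s - lam = 0) ∨
    (∀ s ∈ I, lam * (m - 1) * (3 * ρ - 1) + a s * b s * (m - 1) * (4 * ρ - 1)
        + (a s) ^ 2 * (9 * ρ - 2) * (4 * ρ - 1 + m * (2 * ρ - 1)) = 0) := by
  have hI : IsPreconnected I := hIc.isPreconnected
  have hF₂ : AnalyticOnNhd ℝ (fun s => 3 * (4 * ρ - 1) * a s * b s - lam) I :=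
    ((analyticOnNhd_const.mul hana).mul hbna).sub analyticOnNhd_const
  have hF₃ : AnalyticOnNhd ℝ (fun s => lam * (m - 1) * (3 * ρ - 1)
      + a s * b s * (m - 1) * (4 * ρ - 1)
      + (a s) ^ 2 * (9 * ρ - 2) * (4 * ρ - 1 + m * (2 * ρ - 1))) I :=
    (analyticOnNhd_const.add (((hana.mul hbna).mul analyticOnNhd_const).mul analyticOnNhd_const)).add
      (((hana.pow 2).mul analyticOnNhd_const).mul analyticOnNhd_const)
  have hprod := fun s hs => mul_factors_eq_zero_of_hasDerivAt_X0 hm0 hm1' (habne s hs) (hQ s hs)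
    (hda s hs) (hdb s hs) (hX s hs)
  exact (hbna.eq_zero_or_eq_zero_of_mul_eq_zero (hF₂.mul hF₃) hprod hI).imp_right
    fun h => hF₂.eq_zero_or_eq_zero_of_mul_eq_zero hF₃ h hI

/-- Let m ∉ {0, 1, −1, −2} and ρ ∉ {1/4, 1/6}, λ ∈ ℝ, let I ⊆ ℝ be a
nonempty open connected interval, and let a, b : I → ℝ be real analytic functions
with a(s) ≠ b(s) and Q(a(s),b(s)) ≠ 0 for all s ∈ I, whose derivatives satisfy
a' = A₀(a,b) and b' = B₀(a,b), and such that X(s) := X₀(a(s),b(s)) satisfies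
X' = −2bX on I.  Then at least one of the following holds identically on I:
(1) b ≡ 0; (2) 3(4ρ−1)ab − λ ≡ 0;
(3) λ(m−1)(3ρ−1) + ab(m−1)(4ρ−1) + a²(9ρ−2)(4ρ−1+m(2ρ−1)) ≡ 0. -/
theorem stmt_6 (m ρ lam : ℝ)
    (hm0 : m ≠ 0) (hm1 : m ≠ 1) (hm1' : m ≠ -1) (hm2 : m ≠ -2)
    (hρ4 : ρ ≠ 1 / 4) (hρ6 : ρ ≠ 1 / 6)
    (I : Set ℝ) (hne : I.Nonempty) (hI : IsOpen I) (hIc : I.OrdConnected)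
    (a b : ℝ → ℝ)
    (hana : AnalyticOnNhd ℝ a I) (hbna : AnalyticOnNhd ℝ b I)
    (habne : ∀ s ∈ I, a s ≠ b s)
    (hQ : ∀ s ∈ I, Q m ρ (a s) (b s) ≠ 0)
    (hda : ∀ s ∈ I, HasDerivAt a (A0 m ρ lam (a s) (b s)) s)
    (hdb : ∀ s ∈ I, HasDerivAt b (B0 m ρ lam (a s) (b s)) s)
    (hX : ∀ s ∈ I, HasDerivAt (fun t => X0 m ρ lam (a t) (b t))
        (-2 * b s * X0 m ρ lam (a s) (b s)) s) :
    (∀ s ∈ I, b s = 0) ∨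
    (∀ s ∈ I, 3 * (4 * ρ - 1) * a s * b s - lam = 0) ∨
    (∀ s ∈ I, lam * (m - 1) * (3 * ρ - 1) + a s * b s * (m - 1) * (4 * ρ - 1)
        + (a s) ^ 2 * (9 * ρ - 2) * (4 * ρ - 1 + m * (2 * ρ - 1)) = 0) :=
  stmt_6_general m ρ lam hm0 hm1' I hIc a b hana hbna habne hQ hda hdb hX
end
end

section
/- Let m ∉ {0, 1, −1, −2}, ρ ≠ 1/4, λ ∈ ℝ, and let a, b, a', b' be real numbers with Q(a,b) ≠ 0 such that a' = A₀(a,b), b' = B₀(a,b), and 3(4ρ−1)ab = λ. Then a' + a² = λ/(3(4ρ−1)) and b' + b² = λ/(3(4ρ−1)); in particular a' + a² = b' + b². -/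
noncomputable section

/-- Let m ∉ {0, 1, −1, −2}, ρ ≠ 1/4, λ ∈ ℝ, and let a, b, a', b' be
real numbers with Q(a,b) ≠ 0 such that a' = A₀(a,b), b' = B₀(a,b), and
3(4ρ−1)ab = λ.  Then a' + a² = λ/(3(4ρ−1)) and b' + b² = λ/(3(4ρ−1));
in particular a' + a² = b' + b². -/
theorem stmt_7 (m ρ lam a b a' b' : ℝ)
    (hm0 : m ≠ 0) (hm1 : m ≠ 1) (hm1' : m ≠ -1) (hm2 : m ≠ -2)
    (hρ : ρ ≠ 1 / 4)
    (hQ : Q m ρ a b ≠ 0)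
    (ha' : a' = A0 m ρ lam a b) (hb' : b' = B0 m ρ lam a b)
    (hrel : 3 * (4 * ρ - 1) * a * b = lam) :
    a' + a ^ 2 = lam / (3 * (4 * ρ - 1)) ∧
    b' + b ^ 2 = lam / (3 * (4 * ρ - 1)) ∧
    a' + a ^ 2 = b' + b ^ 2 := by
  have h4 : (4 * ρ - 1) ≠ 0 := fun h => hρ (by linarith)
  have key : lam / (3 * (4 * ρ - 1)) = a * b := by
    rw [← hrel]; field_simp
  subst ha' hb'
  rw [key]
  have hab : A0 m ρ lam a b + a ^ 2 = a * b := by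
    rw [A0, ← hrel, div_add' _ _ _ hQ, div_eq_iff hQ]
    unfold Q; ring
  have hbb : B0 m ρ lam a b + b ^ 2 = a * b := by
    rw [B0, ← hrel, div_add' _ _ _ hQ, div_eq_iff hQ]
    unfold Q; ring
  exact ⟨hab, hbb, hab.trans hbb.symm⟩
end
end

section
/- Let m ∉ {1, −1, −2} and ρ, λ be real parameters, and let b, b', X be real numbers with b ≠ 0. If the structure equations (E1) and (E3) hold with a = 0 and a' = 0, then b' = X and b' + b² = 0. -/
/-- Let m ∉ {1, −1, −2} and ρ, λ be real parameters, and let b, b', X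
be real numbers with b ≠ 0.  If the structure equations (E1) and (E3) hold with
a = 0 and a' = 0, then b' = X and b' + b² = 0. -/
theorem stmt_8 (m ρ lam a b a' b' X : ℝ)
    (hm1 : m ≠ 1) (hm1' : m ≠ -1) (hm2 : m ≠ -2)
    (hb : b ≠ 0) (ha : a = 0) (ha' : a' = 0)
    (hE1 : (m + 1) * a' + (m + 1) * a ^ 2 - (m + 1) * b' - (m + 2) * b ^ 2 + a * b - X = 0)
    (hE3 : (2 * m + 1) * a' * b - (m + 2) * a * b' - (m - 1) * b * (b' - X)
        + 3 * (m + 1) * a * b * (a - b) = 0) :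
    b' = X ∧ b' + b ^ 2 = 0 := by
  subst ha ha'
  have hm1'' : m - 1 ≠ 0 := sub_ne_zero.mpr hm1
  have h1 : b' = X := by
    have : (m - 1) * b * (b' - X) = 0 := by linarith [hE3]
    rcases mul_eq_zero.mp this with h | h
    · rcases mul_eq_zero.mp h with h2 | h2
      · exact absurd h2 hm1''
      · exact absurd h2 hb
    · linarith
  refine ⟨h1, ?_⟩
  have hm2' : m + 2 ≠ 0 := by intro h; apply hm2; linarith
  have : (m + 2) * (b' + b ^ 2) = 0 := by rw [h1] at hE1 ⊢; ring_nf; ring_nf at hE1; linarith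
  exact (mul_eq_zero.mp this).resolve_left hm2'
end

section
/- Let m, ρ, λ be real parameters and let a, a', X be real numbers with a ≠ 0. If the structure equations (E1) and (E2) hold with b = 0 and b' = 0, then (4ρ−1+m(2ρ−1))·(a' + a²) = λ. -/
/-- Let m, ρ, λ be real parameters and let a, a', X be real numbers
with a ≠ 0.  If the structure equations (E1) and (E2) hold with b = 0 and b' = 0,
then (4ρ−1+m(2ρ−1))·(a' + a²) = λ. -/
theorem stmt_9 (m ρ lam a b a' b' X : ℝ)
    (ha : a ≠ 0) (hb : b = 0) (hb' : b' = 0)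
    (hE1 : (m + 1) * a' + (m + 1) * a ^ 2 - (m + 1) * b' - (m + 2) * b ^ 2 + a * b - X = 0)
    (hE2 : (a - b) * (ρ * (2 * a ^ 2 + 4 * a * b + 6 * b ^ 2 + 2 * X + 2 * a' + 4 * b') - lam)
        = a * X + a * b' - a' * b) :
    (4 * ρ - 1 + m * (2 * ρ - 1)) * (a' + a ^ 2) = lam := by
  subst hb hb'
  have h : a * ((4 * ρ - 1 + m * (2 * ρ - 1)) * (a' + a ^ 2) - lam) = 0 := by
    linear_combination hE2 + ((2 * ρ - 1) * a) * hE1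
  rcases mul_eq_zero.mp h with h | h
  · exact absurd h ha
  · linarith
end

section
/- Let m ∉ {1, −1, −3} and take ρ = 0 and λ = 0. Let b, b', X be real numbers with b ≠ 0, set a := ((m−1)/(2(m+1)))·b and a' := ((m−1)/(2(m+1)))·b', and suppose the structure equations (E1) and (E2) hold. Then X = 0 and b' + (3/2)b² = 0. -/
/-!
With `ρ = λ = 0` the left side of (E2) vanishes, while for proportional coefficients
`a = k b`, `a' = k b'` the cross terms `a b' - a' b` cancel, so (E2) reduces to `k b X = 0`,
forcing `X = 0`. For the particular ratio `k = (m - 1) / (2 (m + 1))` the left side of (E1)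
then factors as `-(m + 3) / 2 · (b' + 3/2 b²)`.
-/

lemma mul_add_mul_sub_mul_of_proportional {k a b a' b' X : ℝ}
    (ha : a = k * b) (ha' : a' = k * b') :
    a * X + a * b' - a' * b = k * b * X := by
  subst ha ha'
  ring

lemma structureEq1_of_proportional {m a b a' b' : ℝ} (hm : m ≠ -1)
    (ha : a = (m - 1) / (2 * (m + 1)) * b) (ha' : a' = (m - 1) / (2 * (m + 1)) * b') :
    (m + 1) * a' + (m + 1) * a ^ 2 - (m + 1) * b' - (m + 2) * b ^ 2 + a * b
      = -((m + 3) / 2) * (b' + 3 / 2 * b ^ 2) := by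
  have hm' : m + 1 ≠ 0 := fun h => hm (by linarith)
  subst ha ha'
  field_simp
  ring

/-- Let m ∉ {1, −1, −3} and take ρ = 0 and λ = 0.  Let b, b', X be
real numbers with b ≠ 0, set a := ((m−1)/(2(m+1)))·b and a' := ((m−1)/(2(m+1)))·b',
and suppose the structure equations (E1) and (E2) hold.  Then X = 0 and
b' + (3/2)b² = 0. -/
theorem stmt_11 (m ρ lam a b a' b' X : ℝ)
    (hm1 : m ≠ 1) (hm1' : m ≠ -1) (hm3 : m ≠ -3)
    (hρ : ρ = 0) (hlam : lam = 0)
    (hb : b ≠ 0)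
    (ha : a = (m - 1) / (2 * (m + 1)) * b)
    (ha' : a' = (m - 1) / (2 * (m + 1)) * b')
    (hE1 : (m + 1) * a' + (m + 1) * a ^ 2 - (m + 1) * b' - (m + 2) * b ^ 2 + a * b - X = 0)
    (hE2 : (a - b) * (ρ * (2 * a ^ 2 + 4 * a * b + 6 * b ^ 2 + 2 * X + 2 * a' + 4 * b') - lam)
        = a * X + a * b' - a' * b) :
    X = 0 ∧ b' + (3 / 2) * b ^ 2 = 0 := by
  subst hρ hlam
  have hk : (m - 1) / (2 * (m + 1)) ≠ 0 :=
    div_ne_zero (sub_ne_zero.mpr hm1) (mul_ne_zero two_ne_zero fun h => hm1' (by linarith))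
  have hX : X = 0 := by
    rw [mul_add_mul_sub_mul_of_proportional ha ha'] at hE2
    simpa [hk, hb] using hE2.symm
  subst hX
  rw [sub_zero, structureEq1_of_proportional hm1' ha ha'] at hE1
  have hm3' : -((m + 3) / 2) ≠ 0 := by
    intro h
    exact hm3 (by linarith)
  exact ⟨rfl, (mul_eq_zero.mp hE1).resolve_left hm3'⟩
end

section
/- Let m ∉ {1, −3}, K ∈ ℝ, let I ⊆ ℝ be an open interval, and let ζ, X : I → ℝ be functions with ζ twice differentiable, X differentiable, and ζ(s) ≠ 0 for all s ∈ I, satisfying on I: (m+1)ζ' + (m+3)ζ² + 2X + K = 0, X' = −2ζX, and ζ'' = −4ζζ' + 2ζX. Then X = ζ' on I and ζ' + ζ² + K/(m+3) = 0 on I. -/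
/-! Differentiating the first structure equation and eliminating `ζ''` and `X'` with the other two
leaves `2 (m - 1) ζ (X - ζ') = 0`; as `m ≠ 1` and `ζ ≠ 0` this forces `X = ζ'`, and substituting
back into the first equation gives `(m + 3) (ζ' + ζ²) + K = 0`. -/

theorem HasDerivAt.eq_zero_of_forall_mem_eq_zero {𝕜 F : Type*} [NontriviallyNormedField 𝕜]
    [NormedAddCommGroup F] [NormedSpace 𝕜 F] {f : 𝕜 → F} {f' : F} {U : Set 𝕜} {s : 𝕜}
    (hU : IsOpen U) (hs : s ∈ U) (hf : ∀ t ∈ U, f t = 0) (h : HasDerivAt f f' s) : f' = 0 :=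
  h.unique <| (hasDerivAt_const s 0).congr_of_eventuallyEq <|
    Filter.eventuallyEq_of_mem (hU.mem_nhds hs) hf

theorem eq_of_structure_eq_deriv {m z z' z'' x x' : ℝ} (hm : m ≠ 1) (hz : z ≠ 0)
    (hdiff : (m + 1) * z'' + (m + 3) * (2 * z * z') + 2 * x' = 0)
    (hx' : x' = -2 * z * x) (hz'' : z'' = -4 * z * z' + 2 * z * x) : x = z' := by
  have hfactor : (2 * (m - 1) * z) * (x - z') = 0 := by
    rw [hx', hz''] at hdiff
    linear_combination hdiff
  have hcoeff : 2 * (m - 1) * z ≠ 0 := mul_ne_zero (mul_ne_zero two_ne_zero (sub_ne_zero.2 hm)) hz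
  exact sub_eq_zero.1 ((mul_eq_zero.1 hfactor).resolve_left hcoeff)

theorem riccati_of_structure_eq {m K z z' : ℝ} (hm : m ≠ -3)
    (h : (m + 1) * z' + (m + 3) * z ^ 2 + 2 * z' + K = 0) : z' + z ^ 2 + K / (m + 3) = 0 := by
  have hm3 : m + 3 ≠ 0 := by
    contrapose! hm
    linarith
  field_simp
  linear_combination h

theorem stmt_17_general (m K : ℝ) (hm1 : m ≠ 1) (hm3 : m ≠ -3)
    (I : Set ℝ) (hI : IsOpen I)
    (ζ X : ℝ → ℝ)
    (hζ1 : ∀ s ∈ I, DifferentiableAt ℝ ζ s)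
    (hζ2 : ∀ s ∈ I, DifferentiableAt ℝ (deriv ζ) s)
    (hXd : ∀ s ∈ I, DifferentiableAt ℝ X s)
    (hζ0 : ∀ s ∈ I, ζ s ≠ 0)
    (hE1 : ∀ s ∈ I, (m + 1) * deriv ζ s + (m + 3) * (ζ s) ^ 2 + 2 * X s + K = 0)
    (hEX : ∀ s ∈ I, deriv X s = -2 * ζ s * X s)
    (hE4 : ∀ s ∈ I, deriv (deriv ζ) s = -4 * ζ s * deriv ζ s + 2 * ζ s * X s) :
    ∀ s ∈ I, X s = deriv ζ s ∧ deriv ζ s + (ζ s) ^ 2 + K / (m + 3) = 0 := by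
  intro s hs
  have hdiff : (m + 1) * deriv (deriv ζ) s + (m + 3) * (2 * ζ s * deriv ζ s) + 2 * deriv X s = 0 := by
    refine HasDerivAt.eq_zero_of_forall_mem_eq_zero hI hs hE1 ?_
    refine (((((hζ2 s hs).hasDerivAt.const_mul (m + 1)).add
      (((hζ1 s hs).hasDerivAt.pow 2).const_mul (m + 3))).add
      ((hXd s hs).hasDerivAt.const_mul 2)).add_const K).congr_deriv ?_
    norm_num
  have hX : X s = deriv ζ s := eq_of_structure_eq_deriv hm1 (hζ0 s hs) hdiff (hEX s hs) (hE4 s hs)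
  refine ⟨hX, riccati_of_structure_eq hm3 ?_⟩
  simpa only [hX] using hE1 s hs

/-- Let m ∉ {1, −3}, K ∈ ℝ, let I ⊆ ℝ be an open interval, and let
ζ, X : I → ℝ be functions with ζ twice differentiable, X differentiable, and
ζ(s) ≠ 0 for all s ∈ I, satisfying on I:
(m+1)ζ' + (m+3)ζ² + 2X + K = 0, X' = −2ζX, and ζ'' = −4ζζ' + 2ζX.
Then X = ζ' on I and ζ' + ζ² + K/(m+3) = 0 on I. -/
theorem stmt_17 (m K : ℝ) (hm1 : m ≠ 1) (hm3 : m ≠ -3)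
    (I : Set ℝ) (hI : IsOpen I) (hIc : I.OrdConnected)
    (ζ X : ℝ → ℝ)
    (hζ1 : ∀ s ∈ I, DifferentiableAt ℝ ζ s)
    (hζ2 : ∀ s ∈ I, DifferentiableAt ℝ (deriv ζ) s)
    (hXd : ∀ s ∈ I, DifferentiableAt ℝ X s)
    (hζ0 : ∀ s ∈ I, ζ s ≠ 0)
    (hE1 : ∀ s ∈ I, (m + 1) * deriv ζ s + (m + 3) * (ζ s) ^ 2 + 2 * X s + K = 0)
    (hEX : ∀ s ∈ I, deriv X s = -2 * ζ s * X s)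
    (hE4 : ∀ s ∈ I, deriv (deriv ζ) s = -4 * ζ s * deriv ζ s + 2 * ζ s * X s) :
    ∀ s ∈ I, X s = deriv ζ s ∧ deriv ζ s + (ζ s) ^ 2 + K / (m + 3) = 0 :=
  stmt_17_general m K hm1 hm3 I hI ζ X hζ1 hζ2 hXd hζ0 hE1 hEX hE4
end
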